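/- Let B be a bialgebra over a commutative ring k and let R be a universal R-matrix on B, i.e. an invertible element of the algebra B⊗B satisfying quasi-cocommutativity τ(Δ(b)) = R·Δ(b)·R⁻¹ for all b ∈ B and the hexagon relations (Δ⊗id)(R) = R₁₃·R₂₃ and (id⊗Δ)(R) = R₁₃·R₁₂. Then R satisfies the quantum Yang–Baxter equation R₁₂·R₁₃·R₂₃ = R₂₃·R₁₃·R₁₂ in B⊗B⊗B. -/

import Mathlib

/-!
Quasi-cocommutativity, in the form `R · Δ b = τ (Δ b) · R`, passes through `_ ⊗ id`:
`R₁₂ · (Δ ⊗ id) x = (τ ⊗ id) ((Δ ⊗ id) x) · R₁₂` for every `x ∈ B ⊗ B`. Taking `x = R` and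
expanding `(Δ ⊗ id) R = R₁₃ R₂₃` by the first hexagon relation gives the Yang–Baxter
equation, because `τ ⊗ id` exchanges the legs `R₁₃` and `R₂₃`.
-/

open TensorProduct

noncomputable section

namespace Stmt

variable (R : Type*) [CommRing R] (B : Type*) [Ring B] [Bialgebra R B]

/-- Comultiplication as an algebra homomorphism. -/
def Δ : B →ₐ[R] B ⊗[R] B := Bialgebra.comulAlgHom R B

/-- Flip of the two tensor factors of `B ⊗ B`. -/
def τ : B ⊗[R] B ≃ₐ[R] B ⊗[R] B := Algebra.TensorProduct.comm R B B

/-- Leg embedding `x ↦ x₁₂` of `B ⊗ B` into `B ⊗ B ⊗ B`. -/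
def ι₁₂ : B ⊗[R] B →ₐ[R] B ⊗[R] (B ⊗[R] B) :=
  Algebra.TensorProduct.map (AlgHom.id R B) Algebra.TensorProduct.includeLeft

/-- Leg embedding `x ↦ x₁₃` of `B ⊗ B` into `B ⊗ B ⊗ B`. -/
def ι₁₃ : B ⊗[R] B →ₐ[R] B ⊗[R] (B ⊗[R] B) :=
  Algebra.TensorProduct.map (AlgHom.id R B) Algebra.TensorProduct.includeRight

/-- Leg embedding `x ↦ x₂₃` of `B ⊗ B` into `B ⊗ B ⊗ B`. -/
def ι₂₃ : B ⊗[R] B →ₐ[R] B ⊗[R] (B ⊗[R] B) :=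
  Algebra.TensorProduct.includeRight

/-- `Δ ⊗ id : B ⊗ B → B ⊗ B ⊗ B` (re-associated). -/
def Δ₁ : B ⊗[R] B →ₐ[R] B ⊗[R] (B ⊗[R] B) :=
  (Algebra.TensorProduct.assoc R R R B B B).toAlgHom.comp
    (Algebra.TensorProduct.map (Δ R B) (AlgHom.id R B))

/-- `id ⊗ Δ : B ⊗ B → B ⊗ B ⊗ B`. -/
def Δ₂ : B ⊗[R] B →ₐ[R] B ⊗[R] (B ⊗[R] B) :=
  Algebra.TensorProduct.map (AlgHom.id R B) (Δ R B)

def τ₁₂ : B ⊗[R] (B ⊗[R] B) ≃ₐ[R] B ⊗[R] (B ⊗[R] B) :=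
  ((Algebra.TensorProduct.assoc R R R B B B).symm.trans
    (Algebra.TensorProduct.congr (τ R B) AlgEquiv.refl)).trans
    (Algebra.TensorProduct.assoc R R R B B B)

lemma τ₁₂_assoc_tmul (y : B ⊗[R] B) (c : B) :
    τ₁₂ R B (Algebra.TensorProduct.assoc R R R B B B (y ⊗ₜ c)) =
      Algebra.TensorProduct.assoc R R R B B B (τ R B y ⊗ₜ c) := by
  simp [τ₁₂]

lemma τ₁₂_ι₁₃ (x : B ⊗[R] B) : τ₁₂ R B (ι₁₃ R B x) = ι₂₃ R B x := by
  induction x with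
  | zero => simp
  | tmul a b => simp [τ₁₂, ι₁₃, ι₂₃, τ]
  | add x y hx hy => rw [map_add, map_add, hx, hy, map_add]

lemma τ₁₂_ι₂₃ (x : B ⊗[R] B) : τ₁₂ R B (ι₂₃ R B x) = ι₁₃ R B x := by
  induction x with
  | zero => simp
  | tmul a b => simp [τ₁₂, ι₁₃, ι₂₃, τ]
  | add x y hx hy => rw [map_add, map_add, hx, hy, map_add]

lemma ι₁₂_eq_assoc_tmul_one (x : B ⊗[R] B) :
    ι₁₂ R B x = Algebra.TensorProduct.assoc R R R B B B (x ⊗ₜ 1) := by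
  induction x with
  | zero => simp
  | tmul a b => simp [ι₁₂]
  | add x y hx hy => rw [map_add, hx, hy, ← map_add, ← add_tmul]

lemma Δ₁_tmul (b c : B) :
    Δ₁ R B (b ⊗ₜ c) = Algebra.TensorProduct.assoc R R R B B B (Δ R B b ⊗ₜ c) := by
  simp [Δ₁]

variable {R B}

lemma mul_Δ_eq_τ_Δ_mul {Rm Rm' : B ⊗[R] B} (hinv' : Rm' * Rm = 1)
    (hqc : ∀ b : B, τ R B (Δ R B b) = Rm * Δ R B b * Rm') (b : B) :
    Rm * Δ R B b = τ R B (Δ R B b) * Rm := by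
  rw [hqc b, mul_assoc, mul_assoc, hinv', mul_one]

lemma ι₁₂_mul_Δ₁ {Rm : B ⊗[R] B} (hRm : ∀ b : B, Rm * Δ R B b = τ R B (Δ R B b) * Rm)
    (x : B ⊗[R] B) :
    ι₁₂ R B Rm * Δ₁ R B x = τ₁₂ R B (Δ₁ R B x) * ι₁₂ R B Rm := by
  induction x with
  | zero => simp
  | tmul b c =>
    rw [Δ₁_tmul, τ₁₂_assoc_tmul, ι₁₂_eq_assoc_tmul_one, ← map_mul, ← map_mul,
      Algebra.TensorProduct.tmul_mul_tmul, Algebra.TensorProduct.tmul_mul_tmul,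
      one_mul, mul_one, hRm]
  | add x y hx hy => simp only [map_add, mul_add, add_mul, hx, hy]

variable (R B)

theorem quantum_yang_baxter
    (Rm Rm' : B ⊗[R] B)
    (hinv' : Rm' * Rm = 1)
    (hqc : ∀ b : B, τ R B (Δ R B b) = Rm * Δ R B b * Rm')
    (hhex₁ : Δ₁ R B Rm = ι₁₃ R B Rm * ι₂₃ R B Rm) :
    ι₁₂ R B Rm * ι₁₃ R B Rm * ι₂₃ R B Rm = ι₂₃ R B Rm * ι₁₃ R B Rm * ι₁₂ R B Rm := by
  calc ι₁₂ R B Rm * ι₁₃ R B Rm * ι₂₃ R B Rm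
      = ι₁₂ R B Rm * Δ₁ R B Rm := by rw [hhex₁, mul_assoc]
    _ = τ₁₂ R B (Δ₁ R B Rm) * ι₁₂ R B Rm := ι₁₂_mul_Δ₁ (mul_Δ_eq_τ_Δ_mul hinv' hqc) Rm
    _ = ι₂₃ R B Rm * ι₁₃ R B Rm * ι₁₂ R B Rm := by
      rw [hhex₁, map_mul, τ₁₂_ι₁₃, τ₁₂_ι₂₃]

end Stmt
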